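/- arXiv:1605.08300 — 3 statements merged into one kernel-verified Lean document; each statement's English description precedes it below -/
import Mathlib

section
/- Let M and R be random variables defined on a finite probability space, taking values in finite sets, and assume M and R are stochastically independent. Let E = g(M,R) be a random variable that is a deterministic function of the pair (M,R). Then I(M;E) = H(E) - H(R) + H(R | (E,M)). -/
open scoped Classical

/-- Probability that the random variable `X` (on finite sample space `Ω` with
probability mass function `p`) takes the value `s`. -/
noncomputable def probOf {Ω S : Type*} [Fintype Ω] (p : Ω → ℝ) (X : Ω → S) (s : S) : ℝ :=
  ∑ ω ∈ Finset.univ.filter (fun ω => X ω = s), p ω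

/-- Shannon entropy (natural logarithm) of the random variable `X`. Since
`Real.log 0 = 0`, the convention `0 · log 0 = 0` is automatic. -/
noncomputable def shannonEntropy {Ω S : Type*} [Fintype Ω] [Fintype S]
    (p : Ω → ℝ) (X : Ω → S) : ℝ :=
  -∑ s : S, probOf p X s * Real.log (probOf p X s)

lemma probOf_comp_inj {Ω S T : Type*} [Fintype Ω] (p : Ω → ℝ) (X : Ω → S)
    (f : S → T) (hf : Function.Injective f) (s : S) :
    probOf p (fun ω => f (X ω)) (f s) = probOf p X s := by
  simp [probOf, hf.eq_iff]

lemma probOf_comp_not_range {Ω S T : Type*} [Fintype Ω] (p : Ω → ℝ) (X : Ω → S)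
    (f : S → T) (t : T) (ht : ∀ s, f s ≠ t) :
    probOf p (fun ω => f (X ω)) t = 0 := by
  have h : (Finset.univ.filter (fun ω => f (X ω) = t)) = ∅ := by
    apply Finset.filter_false_of_mem
    intro ω _
    exact ht (X ω)
  simp [probOf, h]

lemma shannonEntropy_comp_inj {Ω S T : Type*} [Fintype Ω] [Fintype S] [Fintype T]
    (p : Ω → ℝ) (X : Ω → S) (f : S → T) (hf : Function.Injective f) :
    shannonEntropy p (fun ω => f (X ω)) = shannonEntropy p X := by
  unfold shannonEntropy
  congr 1
  set F : T → ℝ := fun t => probOf p (fun ω => f (X ω)) t *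
    Real.log (probOf p (fun ω => f (X ω)) t) with hF
  calc ∑ t : T, F t = ∑ t ∈ Finset.univ.image f, F t := by
        refine (Finset.sum_subset (Finset.subset_univ _) ?_).symm
        intro t _ ht
        have h : ∀ s, f s ≠ t := fun s h =>
          ht (Finset.mem_image.mpr ⟨s, Finset.mem_univ s, h⟩)
        simp [hF, probOf_comp_not_range p X f t h]
    _ = ∑ s : S, F (f s) := Finset.sum_image (fun x _ y _ h => hf h)
    _ = ∑ s : S, probOf p X s * Real.log (probOf p X s) := by
        apply Finset.sum_congr rfl
        intro s _
        rw [hF]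
        simp only [probOf_comp_inj p X f hf]

lemma sum_probOf {Ω S : Type*} [Fintype Ω] [Fintype S] (p : Ω → ℝ) (X : Ω → S) :
    ∑ s : S, probOf p X s = ∑ ω : Ω, p ω := by
  unfold probOf
  rw [Finset.sum_fiberwise_of_maps_to (fun ω _ => Finset.mem_univ (X ω))]

lemma shannonEntropy_indep {Ω S T : Type*} [Fintype Ω] [Fintype S] [Fintype T]
    (p : Ω → ℝ) (hsum : ∑ ω : Ω, p ω = 1) (X : Ω → S) (Y : Ω → T)
    (h : ∀ s t, probOf p (fun ω => (X ω, Y ω)) (s, t) = probOf p X s * probOf p Y t) :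
    shannonEntropy p (fun ω => (X ω, Y ω)) = shannonEntropy p X + shannonEntropy p Y := by
  have hX : ∑ s : S, probOf p X s = 1 := by rw [sum_probOf, hsum]
  have hY : ∑ t : T, probOf p Y t = 1 := by rw [sum_probOf, hsum]
  unfold shannonEntropy
  rw [Fintype.sum_prod_type]
  have key : ∀ s t, probOf p (fun ω => (X ω, Y ω)) (s, t) *
      Real.log (probOf p (fun ω => (X ω, Y ω)) (s, t)) =
      probOf p X s * probOf p Y t * Real.log (probOf p X s)
      + probOf p X s * probOf p Y t * Real.log (probOf p Y t) := by
    intro s t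
    rw [h s t]
    by_cases hs : probOf p X s = 0
    · simp [hs]
    by_cases ht : probOf p Y t = 0
    · simp [ht]
    rw [Real.log_mul hs ht]
    ring
  simp only [key, Finset.sum_add_distrib]
  have e1 : ∑ s : S, ∑ t : T, probOf p X s * probOf p Y t * Real.log (probOf p X s)
      = ∑ s : S, probOf p X s * Real.log (probOf p X s) := by
    apply Finset.sum_congr rfl
    intro s _
    calc ∑ t : T, probOf p X s * probOf p Y t * Real.log (probOf p X s)
        = (probOf p X s * Real.log (probOf p X s)) * ∑ t : T, probOf p Y t := by
          rw [Finset.mul_sum]; apply Finset.sum_congr rfl; intro t _; ring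
      _ = probOf p X s * Real.log (probOf p X s) := by rw [hY, mul_one]
  have e2 : ∑ s : S, ∑ t : T, probOf p X s * probOf p Y t * Real.log (probOf p Y t)
      = ∑ t : T, probOf p Y t * Real.log (probOf p Y t) := by
    rw [Finset.sum_comm]
    apply Finset.sum_congr rfl
    intro t _
    calc ∑ s : S, probOf p X s * probOf p Y t * Real.log (probOf p Y t)
        = (probOf p Y t * Real.log (probOf p Y t)) * ∑ s : S, probOf p X s := by
          rw [Finset.mul_sum]; apply Finset.sum_congr rfl; intro s _; ring
      _ = probOf p Y t * Real.log (probOf p Y t) := by rw [hX, mul_one]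
  rw [e1, e2]
  ring

/-- Conditional entropy `H(X | Y) = H(X, Y) - H(Y)`. -/
noncomputable def condEntropyRV {Ω S T : Type*} [Fintype Ω] [Fintype S] [Fintype T]
    (p : Ω → ℝ) (X : Ω → S) (Y : Ω → T) : ℝ :=
  shannonEntropy p (fun ω => (X ω, Y ω)) - shannonEntropy p Y

/-- Mutual information `I(X; Y) = H(X) + H(Y) - H(X, Y)`. -/
noncomputable def mutualInfoRV {Ω S T : Type*} [Fintype Ω] [Fintype S] [Fintype T]
    (p : Ω → ℝ) (X : Ω → S) (Y : Ω → T) : ℝ :=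
  shannonEntropy p X + shannonEntropy p Y - shannonEntropy p (fun ω => (X ω, Y ω))

/-- `X` and `Y` are stochastically independent random variables. -/
def IndepRV {Ω S T : Type*} [Fintype Ω] (p : Ω → ℝ) (X : Ω → S) (Y : Ω → T) : Prop :=
  ∀ s t, probOf p (fun ω => (X ω, Y ω)) (s, t) = probOf p X s * probOf p Y t

/-- For independent `M`, `R` on a finite probability space and
`E = g(M, R)` a deterministic function of the pair,
`I(M; E) = H(E) - H(R) + H(R | (E, M))`. -/
theorem mutualInfo_eq_entropy_sub_add
    {Ω MS RS ES : Type*} [Fintype Ω] [Fintype MS] [Fintype RS] [Fintype ES]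
    (p : Ω → ℝ) (hp : ∀ ω, 0 ≤ p ω) (hsum : ∑ ω : Ω, p ω = 1)
    (M : Ω → MS) (R : Ω → RS) (E : Ω → ES) (g : MS × RS → ES)
    (hE : ∀ ω, E ω = g (M ω, R ω))
    (hMR : IndepRV p M R) :
    mutualInfoRV p M E =
      shannonEntropy p E - shannonEntropy p R + condEntropyRV p R (fun ω => (E ω, M ω)) := by
  have hswap : shannonEntropy p (fun ω => (E ω, M ω)) =
      shannonEntropy p (fun ω => (M ω, E ω)) :=
    shannonEntropy_comp_inj p (fun ω => (M ω, E ω)) (fun x => (x.2, x.1))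
      (fun a b h => by
        simp only [Prod.mk.injEq] at h
        exact Prod.ext h.2 h.1)
  have hjoint : shannonEntropy p (fun ω => (R ω, (E ω, M ω))) =
      shannonEntropy p (fun ω => (M ω, R ω)) := by
    have hfinj : Function.Injective (fun x : MS × RS => (x.2, (g x, x.1))) := by
      intro a b h
      simp only [Prod.mk.injEq] at h
      exact Prod.ext h.2.2 h.1
    have h2 := shannonEntropy_comp_inj p (fun ω => (M ω, R ω)) _ hfinj
    rw [← h2]
    congr 1
    funext ω
    simp [hE ω]
  have hindep := shannonEntropy_indep p hsum M R hMR
  unfold mutualInfoRV condEntropyRV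
  rw [hswap, hjoint, hindep]
  ring
end

section
/- Let q be a prime, p a positive integer, and F = GF(q^p). Let y_1, …, y_K ∈ F be linearly independent over the prime subfield GF(q) = ZMod q. Then the Gabidulin encoding map F^K → F^K sending a coefficient vector m = (m_1,…,m_K) to the evaluation vector (f_m(y_1),…,f_m(y_K)), where f_m(y) = ∑_{j=1}^{K} m_j y^{q^{j-1}}, is injective; in particular, if two coefficient vectors m, m' ∈ F^K satisfy f_m(y_i) = f_{m'}(y_i) for all i = 1,…,K, then m = m'. -/
open Polynomial

lemma gabidulin_key
    (q p K : ℕ) [Fact q.Prime] (hp : 0 < p)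
    (y : Fin K → GaloisField q p)
    (hy : LinearIndependent (ZMod q) y)
    (m : Fin K → GaloisField q p)
    (h : ∀ i : Fin K, ∑ j : Fin K, m j * y i ^ q ^ (j : ℕ) = 0) :
    m = 0 := by
  haveI : Fintype (GaloisField q p) := Fintype.ofFinite _
  by_contra hm
  obtain ⟨j0, hj0⟩ := Function.ne_iff.1 hm
  simp only [Pi.zero_apply] at hj0
  have hq2 : 2 ≤ q := (Fact.out : q.Prime).two_le
  set f : (GaloisField q p)[X] := ∑ j : Fin K, C (m j) * X ^ (q ^ (j : ℕ)) with hf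
  -- f ≠ 0
  have hcoeff : f.coeff (q ^ (j0 : ℕ)) = m j0 := by
    rw [hf, Polynomial.finset_sum_coeff]
    rw [Finset.sum_eq_single j0]
    · simp
    · intro b _ hb
      rw [coeff_C_mul, coeff_X_pow, if_neg, mul_zero]
      intro hpow
      exact hb (Fin.ext (Nat.pow_right_injective hq2 hpow.symm))
    · simp
  have hfne : f ≠ 0 := fun h0 => hj0 (by simp [h0] at hcoeff; exact hcoeff.symm)
  -- eval of f
  have heval : ∀ x : GaloisField q p,
      f.eval x = ∑ j : Fin K, m j * x ^ q ^ (j : ℕ) := by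
    intro x; simp [hf, eval_finset_sum]
  -- degree bound
  have hdeg : f.natDegree ≤ q ^ (K - 1) := by
    refine (natDegree_sum_le _ _).trans ?_
    refine (Finset.fold_max_le _).2 ⟨Nat.zero_le _, fun j _ => ?_⟩
    refine (natDegree_C_mul_le _ _).trans ?_
    refine (natDegree_X_pow_le _).trans ?_
    exact Nat.pow_le_pow_right (by omega) (by omega)
  -- all elements of the span are roots
  set S : Submodule (ZMod q) (GaloisField q p) :=
    Submodule.span (ZMod q) (Set.range y) with hS
  have hroot : ∀ x ∈ S, f.eval x = 0 := by
    intro x hx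
    induction hx using Submodule.span_induction with
    | mem z hz =>
        obtain ⟨i, rfl⟩ := hz
        rw [heval]; exact h i
    | zero =>
        rw [heval]
        refine Finset.sum_eq_zero fun j _ => ?_
        rw [zero_pow (Nat.pow_pos (show 0 < q by omega)).ne', mul_zero]
    | add a b _ _ ha hb =>
        rw [heval] at ha hb ⊢
        have hsum : ∑ j : Fin K, m j * (a + b) ^ q ^ (j : ℕ)
            = (∑ j : Fin K, m j * a ^ q ^ (j : ℕ))
              + ∑ j : Fin K, m j * b ^ q ^ (j : ℕ) := by
          rw [← Finset.sum_add_distrib]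
          exact Finset.sum_congr rfl fun j _ => by rw [add_pow_char_pow, mul_add]
        rw [hsum, ha, hb, add_zero]
    | smul c a _ ha =>
        rw [heval] at ha ⊢
        rw [Algebra.smul_def c a]
        calc ∑ j : Fin K, m j * ((algebraMap (ZMod q) (GaloisField q p) c) * a) ^ q ^ (j : ℕ)
            = ∑ j : Fin K, (algebraMap (ZMod q) (GaloisField q p) c)
                * (m j * a ^ q ^ (j : ℕ)) := by
              refine Finset.sum_congr rfl fun j _ => ?_
              rw [mul_pow, ← map_pow, ZMod.pow_card_pow]; ring
          _ = (algebraMap (ZMod q) (GaloisField q p) c)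
                * ∑ j : Fin K, m j * a ^ q ^ (j : ℕ) := by rw [Finset.mul_sum]
          _ = 0 := by rw [ha, mul_zero]
  -- counting
  haveI : DecidableEq (GaloisField q p) := Classical.decEq _
  haveI : Fintype S := Fintype.ofFinite _
  haveI : Fintype ((S : Set (GaloisField q p))) := Fintype.ofFinite _
  have hrank : Module.finrank (ZMod q) S = K := by
    rw [hS, finrank_span_eq_card hy, Fintype.card_fin]
  have hcard : Fintype.card S = q ^ K := by
    rw [Module.card_eq_pow_finrank (K := ZMod q) (V := S), ZMod.card, hrank]
  set Z : Finset (GaloisField q p) := (S : Set (GaloisField q p)).toFinset with hZ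
  have hZcard : Z.card = q ^ K := by
    rw [hZ, Set.toFinset_card, ← hcard]
    exact Fintype.card_congr (Equiv.refl _)
  have hsub : Z.val ⊆ f.roots := by
    intro x hx
    rw [mem_roots hfne]
    exact hroot x (by simpa [hZ, Set.mem_toFinset] using hx)
  have hle : Z.card ≤ f.natDegree := card_le_degree_of_subset_roots hsub
  have h1 : q ^ K ≤ q ^ (K - 1) := hZcard ▸ hle.trans hdeg
  have hKpos : 0 < K := j0.pos
  have h2 : q ^ (K - 1) < q ^ K := Nat.pow_lt_pow_right (by omega) (by omega)
  omega

/-- If `y_1, …, y_K ∈ F = GF(q^p)` are linearly independent over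
`GF(q) = ZMod q`, then the Gabidulin encoding map
`m ↦ (f_m(y_1), …, f_m(y_K))`, with `f_m(y) = ∑_{j=1}^{K} m_j y^{q^{j-1}}`,
is injective; in particular, if `f_m(y_i) = f_{m'}(y_i)` for all `i`, then `m = m'`. -/
theorem gabidulin_encoding_injective
    (q p K : ℕ) [Fact q.Prime] (hp : 0 < p)
    (y : Fin K → GaloisField q p)
    (hy : LinearIndependent (ZMod q) y) :
    Function.Injective
      (fun m : Fin K → GaloisField q p =>
        fun i : Fin K => ∑ j : Fin K, m j * y i ^ q ^ (j : ℕ)) ∧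
    ∀ m m' : Fin K → GaloisField q p,
      (∀ i : Fin K,
          ∑ j : Fin K, m j * y i ^ q ^ (j : ℕ) = ∑ j : Fin K, m' j * y i ^ q ^ (j : ℕ)) →
      m = m' := by
  have main : ∀ m m' : Fin K → GaloisField q p,
      (∀ i : Fin K,
          ∑ j : Fin K, m j * y i ^ q ^ (j : ℕ) = ∑ j : Fin K, m' j * y i ^ q ^ (j : ℕ)) →
      m = m' := by
    intro m m' hmm
    have hkey := gabidulin_key q p K hp y hy (m - m') (fun i => by
      simp only [Pi.sub_apply, sub_mul, Finset.sum_sub_distrib]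
      rw [hmm i, sub_self])
    funext i
    have := congrFun hkey i
    simpa [sub_eq_zero] using this
  exact ⟨fun m m' h => main m m' (fun i => congrFun h i), main⟩
end

section
/- Let q be a prime, p a positive integer, and F = GF(q^p). Let k ≥ 0 and 1 ≤ ν ≤ u be integers, and let z_1, …, z_ν ∈ F be linearly independent over the prime subfield GF(q) = ZMod q. Then the F-linear map F^u → F^ν sending r = (r_1,…,r_u) to the vector whose j-th component is ∑_{l=1}^{u} r_l · z_j^{q^{k+l-1}} is surjective; equivalently, the u×ν matrix A with entries A_{lj} = z_j^{q^{k+l-1}} has rank ν (full column rank). -/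
open Polynomial

/-- The Frobenius iterate `x ↦ x ^ q ^ k` as a `ZMod q`-linear map on `GaloisField q p`. -/
private noncomputable def frobL (q p k : ℕ) [Fact q.Prime] :
    GaloisField q p →ₗ[ZMod q] GaloisField q p where
  toFun x := x ^ q ^ k
  map_add' x y := add_pow_char_pow ..
  map_smul' g x := by
    simp only [RingHom.id_apply, Algebra.smul_def, mul_pow, ← map_pow,
      ZMod.pow_card_pow]

private lemma frobL_injective (q p k : ℕ) [Fact q.Prime] :
    Function.Injective (frobL q p k) := by
  have h := Function.Injective.iterate (frobenius (GaloisField q p) q).injective k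
  have he : (frobenius (GaloisField q p) q)^[k] = fun x : GaloisField q p => x ^ q ^ k := by
    funext x; exact iterate_frobenius ..
  rw [he] at h
  exact h

/-- Core Moore-matrix lemma: if `w` is linearly independent over `ZMod q`, then no nonzero
`a` satisfies `∑ l, a l * w j ^ q ^ l = 0` for all `j`. -/
private lemma moore_core (q p ν : ℕ) [Fact q.Prime] (hp : 0 < p)
    (w : Fin ν → GaloisField q p) (hw : LinearIndependent (ZMod q) w)
    (a : Fin ν → GaloisField q p)
    (ha : ∀ j, ∑ l : Fin ν, a l * w j ^ q ^ (l : ℕ) = 0) : a = 0 := by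
  classical
  by_contra hne
  obtain ⟨l₀, hl₀⟩ : ∃ l, a l ≠ 0 := by
    by_contra h
    push_neg at h
    exact hne (funext fun l => h l)
  have hq1 : 1 < q := (Fact.out : q.Prime).one_lt
  haveI : NeZero q := ⟨by omega⟩
  have hνpos : 0 < ν := l₀.pos
  set L : (GaloisField q p)[X] := ∑ l : Fin ν, C (a l) * X ^ (q ^ (l : ℕ)) with hLdef
  -- L is nonzero
  have hcoeff : L.coeff (q ^ (l₀ : ℕ)) = a l₀ := by
    rw [hLdef, Polynomial.finset_sum_coeff]
    rw [Finset.sum_eq_single l₀]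
    · simp [Polynomial.coeff_C_mul, Polynomial.coeff_X_pow]
    · intro l _ hll
      have hne' : q ^ (l₀ : ℕ) ≠ q ^ (l : ℕ) := by
        intro h
        exact hll (Fin.ext (Nat.pow_right_injective hq1 h.symm))
      simp [Polynomial.coeff_C_mul, Polynomial.coeff_X_pow, hne']
    · simp
  have hL0 : L ≠ 0 := fun h => hl₀ (by rw [← hcoeff, h, Polynomial.coeff_zero])
  -- degree bound
  have hdeg : L.natDegree ≤ q ^ (ν - 1) := by
    refine Polynomial.natDegree_sum_le_of_forall_le _ _ fun l _ => ?_
    refine le_trans (Polynomial.natDegree_C_mul_le _ _) ?_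
    rw [Polynomial.natDegree_X_pow]
    exact Nat.pow_le_pow_right (le_of_lt hq1) (Nat.le_sub_one_of_lt l.isLt)
  have heval : ∀ y : GaloisField q p, L.eval y = ∑ l : Fin ν, a l * y ^ q ^ (l : ℕ) := by
    intro y; simp [hLdef, Polynomial.eval_finset_sum]
  -- every element of the span of w is a root of L
  have hroot : ∀ x ∈ Submodule.span (ZMod q) (Set.range w), L.IsRoot x := by
    intro x hx
    induction hx using Submodule.span_induction with
    | mem x hxm =>
      obtain ⟨j, rfl⟩ := hxm
      simp [Polynomial.IsRoot, heval, ha j]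
    | zero =>
      have h0 : ∀ l : Fin ν, (0 : GaloisField q p) ^ q ^ (l : ℕ) = 0 :=
        fun l => zero_pow (Nat.pow_pos (by omega)).ne'
      simp [Polynomial.IsRoot, heval, h0]
    | add x y _ _ hx hy =>
      simp only [Polynomial.IsRoot, heval] at hx hy ⊢
      have hadd : ∀ l : Fin ν, (x + y) ^ q ^ (l : ℕ) = x ^ q ^ (l : ℕ) + y ^ q ^ (l : ℕ) :=
        fun l => add_pow_char_pow ..
      simp only [hadd, mul_add, Finset.sum_add_distrib, hx, hy, add_zero]
    | smul g x _ hx =>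
      simp only [Polynomial.IsRoot, heval] at hx ⊢
      have hsm : ∀ l : Fin ν, (g • x) ^ q ^ (l : ℕ) = g • (x ^ q ^ (l : ℕ)) := by
        intro l
        simp only [Algebra.smul_def, mul_pow, ← map_pow, ZMod.pow_card_pow]
      simp only [hsm, mul_smul_comm]
      rw [← Finset.smul_sum, hx, smul_zero]
  -- cardinality contradiction
  haveI : Fintype (GaloisField q p) := Fintype.ofFinite _
  set S := Submodule.span (ZMod q) (Set.range w) with hSdef
  have hfr : Module.finrank (ZMod q) S = ν := by
    rw [hSdef, finrank_span_eq_card hw, Fintype.card_fin]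
  have hcardS : Fintype.card S = q ^ ν := by
    rw [Module.card_eq_pow_finrank (K := ZMod q), hfr, ZMod.card]
  set Z : Finset (GaloisField q p) := (S : Set (GaloisField q p)).toFinset with hZdef
  have hZcard : Z.card = q ^ ν := by
    rw [hZdef, Set.toFinset_card]
    rw [← hcardS]
    exact Fintype.card_congr (Equiv.refl _)
  have hsub : Z.val ⊆ L.roots := by
    intro x hx
    have hxZ : x ∈ Z := hx
    rw [hZdef, Set.mem_toFinset] at hxZ
    exact (Polynomial.mem_roots hL0).2 (hroot x hxZ)
  have hle : Z.card ≤ L.natDegree := Polynomial.card_le_degree_of_subset_roots hsub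
  have : q ^ ν ≤ q ^ (ν - 1) := by
    rw [← hZcard]; exact hle.trans hdeg
  have hlt : q ^ (ν - 1) < q ^ ν := Nat.pow_lt_pow_right hq1 (by omega)
  omega

/-- If `z_1, …, z_ν ∈ F = GF(q^p)` are linearly independent over
`GF(q) = ZMod q` and `1 ≤ ν ≤ u`, then the `F`-linear map `F^u → F^ν` sending
`r` to the vector with `j`-th component `∑_{l=1}^{u} r_l z_j^{q^{k+l-1}}` is
surjective (i.e., the matrix `A_{lj} = z_j^{q^{k+l-1}}` has full column rank `ν`). -/
theorem gabidulin_tail_map_surjective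
    (q p k u ν : ℕ) [Fact q.Prime] (hp : 0 < p)
    (hν : 1 ≤ ν) (hνu : ν ≤ u)
    (z : Fin ν → GaloisField q p)
    (hz : LinearIndependent (ZMod q) z) :
    Function.Surjective
      (fun r : Fin u → GaloisField q p =>
        fun j : Fin ν => ∑ l : Fin u, r l * z j ^ q ^ (k + (l : ℕ))) := by
  classical
  set w : Fin ν → GaloisField q p := fun j => z j ^ q ^ k with hwdef
  have hw : LinearIndependent (ZMod q) w := by
    have h2 := hz.map' (frobL q p k) (LinearMap.ker_eq_bot.2 (frobL_injective q p k))
    have he : ⇑(frobL q p k) ∘ z = w := rfl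
    rwa [he] at h2
  have hzw : ∀ (j : Fin ν) (l : ℕ), z j ^ q ^ (k + l) = w j ^ q ^ l := by
    intro j l
    rw [hwdef]
    rw [← pow_mul, ← pow_add]
  -- the square system is surjective
  set N : Matrix (Fin ν) (Fin ν) (GaloisField q p) := Matrix.of fun j l => w j ^ q ^ (l : ℕ) with hNdef
  have hinj : Function.Injective N.mulVecLin := by
    rw [← LinearMap.ker_eq_bot, LinearMap.ker_eq_bot']
    intro r hr
    refine moore_core q p ν hp w hw r fun j => ?_
    have := congrFun hr j
    simpa [hNdef, Matrix.mulVecLin_apply, Matrix.mulVec, dotProduct, mul_comm] using this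
  have hsurj : Function.Surjective N.mulVecLin :=
    LinearMap.injective_iff_surjective.mp hinj
  intro y
  obtain ⟨r', hr'⟩ := hsurj y
  refine ⟨fun l => if h : (l : ℕ) < ν then r' ⟨l, h⟩ else 0, ?_⟩
  funext j
  have hre : (∑ l : Fin u,
      (if h : (l : ℕ) < ν then r' ⟨(l : ℕ), h⟩ else 0) * z j ^ q ^ (k + (l : ℕ)))
      = ∑ l' : Fin ν, r' l' * w j ^ q ^ (l' : ℕ) := by
    rw [← Finset.sum_subset (Finset.subset_univ
      (Finset.univ.map (Fin.castLEEmb hνu)))]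
    · rw [Finset.sum_map]
      refine Finset.sum_congr rfl fun l' _ => ?_
      have hlt : ((Fin.castLEEmb hνu l' : Fin u) : ℕ) < ν := l'.isLt
      rw [dif_pos hlt, hzw]
      congr 1
    · intro x _ hx
      have hxν : ¬ ((x : ℕ) < ν) := by
        intro hlt
        apply hx
        simp only [Finset.mem_map, Finset.mem_univ, true_and]
        exact ⟨⟨(x : ℕ), hlt⟩, by ext; simp⟩
      rw [dif_neg hxν, zero_mul]
  simp only []
  rw [hre]
  have := congrFun hr' j
  rw [← this]
  simp [hNdef, Matrix.mulVecLin_apply, Matrix.mulVec, dotProduct, mul_comm]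
end
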